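/- Let g ≥ 0, T > 0, let f₁, f₂ : ℝ → ℝ be C² and T-periodic with f₁(t) < f₂(t) for all t, and fix l > sup_{t₁,t₂} |f₂(t₂) − f₁(t₁)|. Then there exist r > 0 and c₁ > 0 such that for every 6-tuple (t, v, t̃, ṽ, t', v') satisfying the one-step Fermi–Ulam relations with v' > 0 and 0 < 2l/v ≤ r, one has |2l/v' − 2l/v| < c₁·(2l/v)². -/
import Mathlib


open Filter Topology

/-- One bounce cycle of the Fermi–Ulam model in an external field with downward
acceleration `g`: the ball leaves the lower plate `f₁` at time `t` with
velocity `v > 0`, hits the upper plate `f₂` at the first possible time `t̃ > t`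
leaving it with velocity `ṽ < 0`, and returns to the lower plate at the first
possible time `t' > t̃`, leaving it with velocity `v'`. -/
def FUStep (g : ℝ) (f₁ f₂ : ℝ → ℝ) (t v tt vv t' v' : ℝ) : Prop :=
  0 < v ∧ vv < 0 ∧ t < tt ∧ tt < t' ∧
  f₂ tt - f₁ t = v * (tt - t) - g / 2 * (tt - t) ^ 2 ∧
  (∀ s : ℝ, t < s →
    f₂ s - f₁ t = v * (s - t) - g / 2 * (s - t) ^ 2 → tt ≤ s) ∧
  vv = -v + g * (tt - t) + 2 * deriv f₂ tt ∧
  f₂ tt - f₁ t' = -vv * (t' - tt) + g / 2 * (t' - tt) ^ 2 ∧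
  (∀ s : ℝ, tt < s →
    f₂ tt - f₁ s = -vv * (s - tt) + g / 2 * (s - tt) ^ 2 → t' ≤ s) ∧
  v' = v + g * (t' - 2 * tt + t) + 2 * deriv f₁ t' - 2 * deriv f₂ tt

lemma periodic_deriv_bound (f : ℝ → ℝ) (T : ℝ) (hf : ContDiff ℝ 2 f) (hT : T ≠ 0)
    (hp : Function.Periodic f T) : ∃ M : ℝ, ∀ s, |deriv f s| ≤ M := by
  have hpd : Function.Periodic (deriv f) T := by
    intro x
    have h : (fun y => f (y + T)) = f := funext fun y => hp y
    rw [← deriv_comp_add_const f T, h]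
  have hc : Continuous (deriv f) := hf.continuous_deriv one_le_two
  obtain ⟨M, hM⟩ := isBounded_iff_forall_norm_le.mp
    (hpd.isBounded_of_continuous hT hc)
  exact ⟨M, fun s => hM _ (Set.mem_range_self s)⟩

/-- Estimate (4.14): in the coordinate `y = 2l/v`, the radial displacement of
the Fermi–Ulam return map is quadratically small in `y`. -/
theorem fermi_ulam_radial_estimate
    (g T : ℝ) (hg : 0 ≤ g) (hT : 0 < T) (f₁ f₂ : ℝ → ℝ)
    (hf₁ : ContDiff ℝ 2 f₁) (hf₂ : ContDiff ℝ 2 f₂)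
    (hper₁ : Function.Periodic f₁ T) (hper₂ : Function.Periodic f₂ T)
    (hlt : ∀ s : ℝ, f₁ s < f₂ s)
    (l : ℝ) (hl : ∀ t₁ t₂ : ℝ, |f₂ t₂ - f₁ t₁| < l) :
    ∃ r > (0 : ℝ), ∃ c₁ > (0 : ℝ), ∀ t v tt vv t' v' : ℝ,
      FUStep g f₁ f₂ t v tt vv t' v' → 0 < v' →
      0 < 2 * l / v → 2 * l / v ≤ r →
      |2 * l / v' - 2 * l / v| < c₁ * (2 * l / v) ^ 2 := by
  have hl0 : 0 < l := lt_of_le_of_lt (abs_nonneg _) (hl 0 0)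
  have hgl : 0 ≤ g * l := mul_nonneg hg hl0.le
  obtain ⟨M, hM0, hM1, hM2⟩ :
      ∃ M : ℝ, 0 ≤ M ∧ (∀ s, |deriv f₁ s| ≤ M) ∧ (∀ s, |deriv f₂ s| ≤ M) := by
    obtain ⟨M₁, hM₁⟩ := periodic_deriv_bound f₁ T hf₁ hT.ne' hper₁
    obtain ⟨M₂, hM₂⟩ := periodic_deriv_bound f₂ T hf₂ hT.ne' hper₂
    refine ⟨max (max M₁ M₂) 0, le_max_right _ _, fun s => ?_, fun s => ?_⟩
    · exact (hM₁ s).trans ((le_max_left M₁ M₂).trans (le_max_left _ _))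
    · exact (hM₂ s).trans ((le_max_right M₁ M₂).trans (le_max_left _ _))
  obtain ⟨K, hKdef⟩ : ∃ K : ℝ, K = 4 * g * l + 4 * M := ⟨_, rfl⟩
  have hK0 : 0 ≤ K := by rw [hKdef]; linarith
  obtain ⟨v₀, hv₀def⟩ : ∃ v₀ : ℝ, v₀ = 1 + 8 * M + 8 * g * l + 2 * K := ⟨_, rfl⟩
  have hv₀pos : 0 < v₀ := by rw [hv₀def]; linarith
  refine ⟨2 * l / v₀, by positivity, K / l + 1, by positivity, ?_⟩
  intro t v tt vv t' v' hFU hv'pos hy hyr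
  obtain ⟨hv, hvv, httt, htt', heq₁, hmin₁, hvveq, heq₂, hmin₂, hv'eq⟩ := hFU
  have hc₁ : Continuous f₁ := hf₁.continuous
  have hc₂ : Continuous f₂ := hf₂.continuous
  -- v₀ ≤ v and basic size facts
  have hvv₀ : v₀ ≤ v := by
    rw [div_le_div_iff₀ hv hv₀pos] at hyr
    have h2l : 0 < 2 * l := by positivity
    exact le_of_mul_le_mul_left hyr h2l
  have hv1 : 1 ≤ v := by rw [hv₀def] at hvv₀; linarith
  have hv8M : 8 * M ≤ v := by rw [hv₀def] at hvv₀; linarith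
  have hv8gl : 8 * g * l ≤ v := by rw [hv₀def] at hvv₀; linarith
  have hv2K : 2 * K ≤ v := by rw [hv₀def] at hvv₀; linarith
  have hvsq : 8 * g * l ≤ v ^ 2 := by
    have h := mul_le_mul_of_nonneg_left hv1 hv.le
    linarith
  -- the small quantity q = 2l/v
  obtain ⟨q, hqdef⟩ : ∃ q : ℝ, q = 2 * l / v := ⟨_, rfl⟩
  have hq0 : 0 < q := by rw [hqdef]; positivity
  have hqv : q * v = 2 * l := by rw [hqdef]; field_simp
  have hgqv : g * (q * v) = g * (2 * l) := by rw [hqv]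
  have hgq : g * q ≤ v / 4 := by
    have h2 : g * q * v ≤ v / 4 * v := by linarith [hgqv, hvsq]
    exact le_of_mul_le_mul_right h2 hv
  have hgq0 : 0 ≤ g * q := mul_nonneg hg hq0.le
  have hgq2l : g * q ≤ 2 * g * l := by
    have h := mul_le_mul_of_nonneg_left hv1 hgq0
    linarith [hgqv]
  -- Step A : tt - t ≤ q
  have hτ₁ : tt - t ≤ q := by
    obtain ⟨b, hbdef⟩ : ∃ b : ℝ, b = t + q := ⟨_, rfl⟩
    have htb : t < b := by rw [hbdef]; linarith
    have hHcont : ContinuousOn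
        (fun s => v * (s - t) - g / 2 * (s - t) ^ 2 - (f₂ s - f₁ t)) (Set.Icc t b) := by
      apply Continuous.continuousOn; fun_prop
    have hHt : v * (t - t) - g / 2 * (t - t) ^ 2 - (f₂ t - f₁ t) < 0 := by
      have h0 : v * (t - t) - g / 2 * (t - t) ^ 2 = 0 := by ring
      have := hlt t
      linarith
    have hHb : 0 < v * (b - t) - g / 2 * (b - t) ^ 2 - (f₂ b - f₁ t) := by
      have hfb : f₂ b - f₁ t < l := (abs_lt.mp (hl t b)).2
      have hbt : b - t = q := by rw [hbdef]; ring
      have hb1 : v * (b - t) = 2 * l := by rw [hbt, mul_comm]; exact hqv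
      have hb2 : g / 2 * (b - t) ^ 2 ≤ l := by
        rw [hbt]
        have h := mul_le_mul_of_nonneg_right hgq hq0.le
        linarith [hqv, hl0]
      linarith
    obtain ⟨s, hsmem, hs0⟩ := intermediate_value_Icc htb.le hHcont ⟨hHt.le, hHb.le⟩
    simp only at hs0
    have hts : t < s := by
      rcases lt_or_eq_of_le hsmem.1 with h | h
      · exact h
      · exfalso; rw [← h] at hs0; linarith
    have hseq : f₂ s - f₁ t = v * (s - t) - g / 2 * (s - t) ^ 2 := by linarith
    have h1 := hmin₁ s hts hseq
    have hsb : s ≤ b := hsmem.2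
    rw [hbdef] at hsb
    linarith
  -- Step B : -vv ≥ v/2
  have hw : v / 2 ≤ -vv := by
    have h1 : g * (tt - t) ≤ g * q := mul_le_mul_of_nonneg_left hτ₁ hg
    have h4 : 2 * deriv f₂ tt ≤ v / 4 := by
      have := (abs_le.mp (hM2 tt)).2
      linarith
    rw [hvveq]; linarith
  have hwpos : 0 < -vv := by linarith
  -- Step C : t' - tt ≤ 2*q
  have hτ₂ : t' - tt ≤ 2 * q := by
    obtain ⟨q₂, hq₂def⟩ : ∃ q₂ : ℝ, q₂ = 2 * l / (-vv) := ⟨_, rfl⟩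
    have hq₂0 : 0 < q₂ := by rw [hq₂def]; positivity
    have hq₂v : q₂ * (-vv) = 2 * l := by
      rw [hq₂def]; exact div_mul_cancel₀ _ (ne_of_gt hwpos)
    have hq₂q : q₂ ≤ 2 * q := by
      have h := mul_le_mul_of_nonneg_left hw hq₂0.le
      have h2 : q₂ * v ≤ 2 * q * v := by linarith [hq₂v, hqv]
      exact le_of_mul_le_mul_right h2 hv
    have hτ₂' : t' - tt ≤ q₂ := by
      obtain ⟨b₂, hb₂def⟩ : ∃ b₂ : ℝ, b₂ = tt + q₂ := ⟨_, rfl⟩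
      have htb₂ : tt < b₂ := by rw [hb₂def]; linarith
      have hH₂cont : ContinuousOn
          (fun s => -vv * (s - tt) + g / 2 * (s - tt) ^ 2 - (f₂ tt - f₁ s))
          (Set.Icc tt b₂) := by
        apply Continuous.continuousOn; fun_prop
      have hH₂t : -vv * (tt - tt) + g / 2 * (tt - tt) ^ 2 - (f₂ tt - f₁ tt) < 0 := by
        have h0 : -vv * (tt - tt) + g / 2 * (tt - tt) ^ 2 = 0 := by ring
        have := hlt tt
        linarith
      have hH₂b : 0 < -vv * (b₂ - tt) + g / 2 * (b₂ - tt) ^ 2 - (f₂ tt - f₁ b₂) := by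
        have hfb : f₂ tt - f₁ b₂ < l := (abs_lt.mp (hl b₂ tt)).2
        have hbt : b₂ - tt = q₂ := by rw [hb₂def]; ring
        have hb1 : -vv * (b₂ - tt) = 2 * l := by rw [hbt, mul_comm]; exact hq₂v
        have hb2 : 0 ≤ g / 2 * (b₂ - tt) ^ 2 := by positivity
        linarith
      obtain ⟨s, hsmem, hs0⟩ := intermediate_value_Icc htb₂.le hH₂cont ⟨hH₂t.le, hH₂b.le⟩
      simp only at hs0
      have hts : tt < s := by
        rcases lt_or_eq_of_le hsmem.1 with h | h
        · exact h
        · exfalso; rw [← h] at hs0; linarith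
      have hseq : f₂ tt - f₁ s = -vv * (s - tt) + g / 2 * (s - tt) ^ 2 := by linarith
      have h1 := hmin₂ s hts hseq
      have hsb : s ≤ b₂ := hsmem.2
      rw [hb₂def] at hsb
      linarith
    linarith
  -- Step D : |v' - v| ≤ K
  have hD : |v' - v| ≤ K := by
    have hd1 := abs_le.mp (hM1 t')
    have hd2 := abs_le.mp (hM2 tt)
    have hτ₁pos : 0 < tt - t := by linarith
    have hτ₂pos : 0 < t' - tt := by linarith
    have hgb1 : g * (t' - tt) ≤ 4 * g * l := by
      have h1 : g * (t' - tt) ≤ g * (2 * q) := mul_le_mul_of_nonneg_left hτ₂ hg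
      have h2 : g * (2 * q) = 2 * (g * q) := by ring
      linarith [hgq2l]
    have hgb2 : g * (tt - t) ≤ 4 * g * l := by
      have h1 : g * (tt - t) ≤ g * q := mul_le_mul_of_nonneg_left hτ₁ hg
      linarith [hgq2l, hgl]
    have hgp1 : 0 ≤ g * (t' - tt) := mul_nonneg hg hτ₂pos.le
    have hgp2 : 0 ≤ g * (tt - t) := mul_nonneg hg hτ₁pos.le
    have hsplit : g * (t' - 2 * tt + t) = g * (t' - tt) - g * (tt - t) := by ring
    rw [hv'eq, abs_le, hKdef]
    constructor
    · linarith
    · linarith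
  -- Step E : v/2 ≤ v'
  have hE : v / 2 ≤ v' := by
    have := abs_le.mp hD
    linarith
  -- Step F : conclusion
  have hdiff : 2 * l / v' - 2 * l / v = 2 * l * (v - v') / (v' * v) := by
    field_simp
  have habs : |2 * l / v' - 2 * l / v| = 2 * l * |v - v'| / (v' * v) := by
    rw [hdiff, abs_div, abs_mul, abs_of_pos (by positivity : (0:ℝ) < 2 * l),
      abs_of_pos (mul_pos hv'pos hv)]
  have hnum : 2 * l * |v - v'| ≤ 2 * l * K := by
    have h := hD
    rw [abs_sub_comm] at h
    exact mul_le_mul_of_nonneg_left h (by positivity)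
  have hden : v / 2 * v ≤ v' * v := mul_le_mul_of_nonneg_right hE hv.le
  have hchain : 2 * l * |v - v'| / (v' * v) ≤ 2 * l * K / (v / 2 * v) :=
    div_le_div₀ (by positivity) hnum (by positivity) hden
  have heq2 : 2 * l * K / (v / 2 * v) = 4 * l * K / v ^ 2 := by
    field_simp
    ring
  have hexp : (K / l + 1) * (2 * l / v) ^ 2 = 4 * l * K / v ^ 2 + 4 * l ^ 2 / v ^ 2 := by
    field_simp
    ring
  have hpos : 0 < 4 * l ^ 2 / v ^ 2 := by positivity
  calc |2 * l / v' - 2 * l / v| = 2 * l * |v - v'| / (v' * v) := habs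
    _ ≤ 2 * l * K / (v / 2 * v) := hchain
    _ = 4 * l * K / v ^ 2 := heq2
    _ < (K / l + 1) * (2 * l / v) ^ 2 := by rw [hexp]; linarith
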